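/- arXiv:1905.04257 — 6 statements merged into one kernel-verified Lean document; each statement's English description precedes it below -/
import Mathlib

section
/- Let q_1,...,q_n ∈ [0,1] and β ≥ 1. Then 1 - ∏_{i=1}^n (1 - q_i/β) ≥ (1/β)·(1 - ∏_{i=1}^n (1 - q_i)). -/
/-!
Write `t = 1/β ∈ [0, 1]` and induct on the number of events. Adding an event of probability `q`
to a family whose "no event" probabilities are `P ≤ Q` (unscaled, scaled) raises the left side by
`t q P` and the right side by `t q Q`, so the inequality propagates.
-/

open Finset

variable {ι : Type*} {s : Finset ι} {q : ι → ℝ} {t : ℝ}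

lemma prod_one_sub_le_prod_one_sub_mul (hq : ∀ i ∈ s, q i ∈ Set.Icc (0 : ℝ) 1)
    (ht : t ∈ Set.Icc (0 : ℝ) 1) :
    ∏ i ∈ s, (1 - q i) ≤ ∏ i ∈ s, (1 - t * q i) := by
  refine prod_le_prod (fun i hi => sub_nonneg.2 (hq i hi).2) fun i hi => ?_
  have : t * q i ≤ q i := mul_le_of_le_one_left (hq i hi).1 ht.2
  linarith

lemma mul_one_sub_prod_le_one_sub_prod_mul (hq : ∀ i ∈ s, q i ∈ Set.Icc (0 : ℝ) 1)
    (ht : t ∈ Set.Icc (0 : ℝ) 1) :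
    t * (1 - ∏ i ∈ s, (1 - q i)) ≤ 1 - ∏ i ∈ s, (1 - t * q i) := by
  classical
  induction s using Finset.induction_on with
  | empty => simp
  | insert a s ha ih =>
    have hqs : ∀ i ∈ s, q i ∈ Set.Icc (0 : ℝ) 1 := fun i hi => hq i (mem_insert_of_mem hi)
    have hP_le_Q := prod_one_sub_le_prod_one_sub_mul hqs ht
    have hgain := mul_le_mul_of_nonneg_left hP_le_Q
      (mul_nonneg ht.1 (hq a (mem_insert_self a s)).1)
    rw [prod_insert ha, prod_insert ha]
    linarith [ih hqs]

/-- Scaling each probability `q i` down by `β ≥ 1` decreases the probability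
that at least one of `n` independent events occurs by at most a factor `β`. -/
theorem product_inequality (n : ℕ) (q : Fin n → ℝ)
    (hq : ∀ i, q i ∈ Set.Icc (0 : ℝ) 1) (β : ℝ) (hβ : 1 ≤ β) :
    (1 / β) * (1 - ∏ i, (1 - q i)) ≤ 1 - ∏ i, (1 - q i / β) := by
  have ht : β⁻¹ ∈ Set.Icc (0 : ℝ) 1 := ⟨by positivity, inv_le_one_of_one_le₀ hβ⟩
  simpa only [div_eq_inv_mul, mul_one] using
    mul_one_sub_prod_le_one_sub_prod_mul (s := univ) (fun i _ => hq i) ht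
end

section
/- Let P, R : [0,1] → ℝ≥0 with R concave, R(0) = 0, and suppose P is (α,β)-close to R, i.e., P(q) ≥ R(q)/α for all q ∈ [0, 1/β], with α, β ≥ 1. For a price p > 0 define Q(p, C) = sup{q ∈ [0,1] : C(q) ≥ q·p} (with Q = 0 if the set is empty). Then for every price p̂ > 0: if Q(p̂, R) ≤ 1/β then Q(p̂/α, P) ≥ Q(p̂, R), and otherwise Q(p̂/α, P) ≥ Q(p̂, R)/β. -/
/-- `Q p C` is the largest quantile `q ∈ [0,1]` at which the effective
per-unit price `p` is accepted, i.e. with `C q ≥ q * p` (and `0` if none). -/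
noncomputable def acceptQuantile (p : ℝ) (C : ℝ → ℝ) : ℝ :=
  sSup {q : ℝ | q ∈ Set.Icc (0 : ℝ) 1 ∧ q * p ≤ C q}

/-- If `P` is `(α,β)`-close for price posting to a concave ex ante revenue
curve `R`, then the quantile accepting price `phat/α` under `P` is at least the
quantile accepting `phat` under `R` (when the latter is at most `1/β`), and at
least a `1/β` fraction of it otherwise. -/
theorem quantile_lower_bound (P R : ℝ → ℝ) (α β : ℝ) (hα : 1 ≤ α) (hβ : 1 ≤ β)
    (hPnn : ∀ q ∈ Set.Icc (0 : ℝ) 1, 0 ≤ P q)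
    (hRnn : ∀ q ∈ Set.Icc (0 : ℝ) 1, 0 ≤ R q)
    (hconc : ConcaveOn ℝ (Set.Icc (0 : ℝ) 1) R) (hR0 : R 0 = 0)
    (hclose : ∀ q ∈ Set.Icc (0 : ℝ) (1 / β), R q / α ≤ P q)
    (phat : ℝ) (hp : 0 < phat) :
    (acceptQuantile phat R ≤ 1 / β →
      acceptQuantile phat R ≤ acceptQuantile (phat / α) P) ∧
    (1 / β < acceptQuantile phat R →
      acceptQuantile phat R / β ≤ acceptQuantile (phat / α) P) := by
  have hα0 : (0:ℝ) < α := lt_of_lt_of_le one_pos hα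
  have hβ0 : (0:ℝ) < β := lt_of_lt_of_le one_pos hβ
  set S : Set ℝ := {q : ℝ | q ∈ Set.Icc (0:ℝ) 1 ∧ q * phat ≤ R q} with hS
  set S' : Set ℝ := {q : ℝ | q ∈ Set.Icc (0:ℝ) 1 ∧ q * (phat/α) ≤ P q} with hS'
  have hSne : S.Nonempty := ⟨0, ⟨Set.mem_Icc.2 ⟨le_rfl, zero_le_one⟩, by simp [hR0]⟩⟩
  have hS'ne : S'.Nonempty := ⟨0, ⟨Set.mem_Icc.2 ⟨le_rfl, zero_le_one⟩, by
    simpa using hPnn 0 (Set.mem_Icc.2 ⟨le_rfl, zero_le_one⟩)⟩⟩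
  have hSbdd : BddAbove S := ⟨1, fun q hq => hq.1.2⟩
  have hS'bdd : BddAbove S' := ⟨1, fun q hq => hq.1.2⟩
  -- key: if q ∈ S and q ≤ 1/β then q ∈ S'
  have key : ∀ q ∈ S, q ≤ 1/β → q ∈ S' := by
    intro q hq hq1
    refine ⟨hq.1, ?_⟩
    have h1 : R q / α ≤ P q := hclose q ⟨hq.1.1, hq1⟩
    have h2 : q * phat / α ≤ R q / α := div_le_div_of_nonneg_right hq.2 hα0.le
    calc q * (phat/α) = q * phat / α := by ring
      _ ≤ R q / α := h2
      _ ≤ P q := h1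
  -- concavity: for q ∈ [0,1], R q / β ≤ R (q/β)
  have hcon : ∀ q ∈ Set.Icc (0:ℝ) 1, R q / β ≤ R (q / β) := by
    intro q hq
    have ha : (0:ℝ) ≤ 1/β := by positivity
    have hb : (0:ℝ) ≤ 1 - 1/β := by
      have : 1/β ≤ 1 := by
        rw [div_le_one hβ0]; exact hβ
      linarith
    have h := hconc.2 hq (Set.mem_Icc.2 ⟨le_rfl, zero_le_one⟩ :
      (0:ℝ) ∈ Set.Icc (0:ℝ) 1) ha hb (by ring)
    simpa [hR0, smul_eq_mul, one_div, div_eq_inv_mul] using h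
  -- membership of q/β in S' for q ∈ S
  have key2 : ∀ q ∈ S, q / β ∈ S' := by
    intro q hq
    have hq0 : 0 ≤ q := hq.1.1
    have hq1 : q ≤ 1 := hq.1.2
    have hqb0 : 0 ≤ q/β := by positivity
    have hqble : q/β ≤ 1/β := div_le_div_of_nonneg_right hq1 hβ0.le
    have hqb1 : q/β ≤ 1 := le_trans hqble (by rw [div_le_one hβ0]; exact hβ)
    refine ⟨Set.mem_Icc.2 ⟨hqb0, hqb1⟩, ?_⟩
    have h1 : R (q/β) / α ≤ P (q/β) := hclose _ ⟨hqb0, hqble⟩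
    have h2 : R q / β ≤ R (q/β) := hcon q hq.1
    have h3 : q * phat / β ≤ R q / β := div_le_div_of_nonneg_right hq.2 hβ0.le
    have h4 : q * phat / β / α ≤ R (q/β) / α :=
      div_le_div_of_nonneg_right (le_trans h3 h2) hα0.le
    calc q/β * (phat/α) = q * phat / β / α := by ring
      _ ≤ R (q/β) / α := h4
      _ ≤ P (q/β) := h1
  constructor
  · intro hle
    apply csSup_le hSne
    intro q hq
    exact le_csSup hS'bdd (key q hq (le_trans (le_csSup hSbdd hq) hle))
  · intro _
    rw [div_le_iff₀ hβ0]
    apply csSup_le hSne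
    intro q hq
    have := le_csSup hS'bdd (key2 q hq)
    calc q = q / β * β := by field_simp
      _ ≤ acceptQuantile (phat/α) P * β := by
          exact mul_le_mul_of_nonneg_right this (le_of_lt hβ0)
end

section
/- If P : [0,1] → ℝ≥0 is (α,β)-close for price posting to R : [0,1] → ℝ≥0 with R nondecreasing on [0, 1/β] ∪ nonnegative, R(0)=0, R concave, and P ≤ R pointwise, then sup_q P(q) ≥ (1/(αβ)) · sup_q R(q). -/
/-!
Concavity of `R` together with `R 0 = 0` makes `R q / q` nonincreasing, so for `q ≥ 1/β`
we get `R q ≤ β q R(1/β) ≤ β R(1/β)`; for `q ≤ 1/β` monotonicity gives the same bound.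
Hence `sup R ≤ β R(1/β) ≤ αβ P(1/β) ≤ αβ sup P`.
-/

open Set

lemma ConcaveOn.div_le_div_of_map_zero {s : Set ℝ} {f : ℝ → ℝ} (hf : ConcaveOn ℝ s f)
    (h0 : 0 ∈ s) (hf0 : f 0 = 0) {x y : ℝ} (hx : x ∈ s) (hy : y ∈ s) (hx0 : 0 < x)
    (hxy : x ≤ y) : f y / y ≤ f x / x := by
  have := hf.slope_anti h0 ⟨hx, hx0.ne'⟩ ⟨hy, (hx0.trans_le hxy).ne'⟩ hxy
  simpa only [slope_def_field, hf0, sub_zero] using this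

lemma ConcaveOn.div_mem_upperBounds_image_Icc {f : ℝ → ℝ} {b : ℝ}
    (hf : ConcaveOn ℝ (Icc 0 1) f) (hf0 : f 0 = 0) (hmono : MonotoneOn f (Icc 0 b))
    (hb0 : 0 < b) (hb1 : b ≤ 1) : f b / b ∈ upperBounds (f '' Icc 0 1) := by
  have hb : b ∈ Icc (0 : ℝ) b := ⟨hb0.le, le_rfl⟩
  have hfb : 0 ≤ f b := hf0 ▸ hmono (left_mem_Icc.2 hb0.le) hb hb0.le
  have hfb_le : f b ≤ f b / b := le_div_self hfb hb0 hb1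
  rintro _ ⟨q, hq, rfl⟩
  rcases le_total q b with hqb | hbq
  · exact (hmono ⟨hq.1, hqb⟩ hb hqb).trans hfb_le
  · have hslope := hf.div_le_div_of_map_zero (left_mem_Icc.2 zero_le_one) hf0 ⟨hb0.le, hb1⟩ hq
      hb0 hbq
    calc f q = q * (f q / q) := by field_simp [(hb0.trans_le hbq).ne']
      _ ≤ q * (f b / b) := by gcongr; exact hq.1
      _ ≤ 1 * (f b / b) := by gcongr; exact hq.2
      _ = f b / b := one_mul _

theorem optimal_price_approximates_optimal_revenue_general (P R : ℝ → ℝ) (α β : ℝ)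
    (hα : 1 ≤ α) (hβ : 1 ≤ β)
    (hRmono : MonotoneOn R (Set.Icc (0 : ℝ) (1 / β)))
    (hR0 : R 0 = 0)
    (hconc : ConcaveOn ℝ (Set.Icc (0 : ℝ) 1) R)
    (hPR : ∀ q ∈ Set.Icc (0 : ℝ) 1, P q ≤ R q)
    (hclose : ∀ q ∈ Set.Icc (0 : ℝ) (1 / β), R q / α ≤ P q) :
    (1 / (α * β)) * sSup (R '' Set.Icc (0 : ℝ) 1) ≤ sSup (P '' Set.Icc (0 : ℝ) 1) := by
  have hα0 : 0 < α := one_pos.trans_le hα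
  have hβ0 : 0 < β := one_pos.trans_le hβ
  have hb0 : 0 < 1 / β := one_div_pos.2 hβ0
  have hb1 : 1 / β ≤ 1 := div_le_one_of_le₀ hβ hβ0.le
  have hRbound : β * R (1 / β) ∈ upperBounds (R '' Icc 0 1) := by
    simpa only [div_div_eq_mul_div, mul_one, div_one, mul_comm] using
      hconc.div_mem_upperBounds_image_Icc hR0 hRmono hb0 hb1
  have hRsup : sSup (R '' Icc 0 1) ≤ β * R (1 / β) :=
    csSup_le ((nonempty_Icc.2 zero_le_one).image R) hRbound
  have hPb : P (1 / β) ≤ sSup (P '' Icc 0 1) := by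
    refine le_csSup ⟨β * R (1 / β), ?_⟩ ⟨1 / β, ⟨hb0.le, hb1⟩, rfl⟩
    rintro _ ⟨q, hq, rfl⟩
    exact (hPR q hq).trans (hRbound ⟨q, hq, rfl⟩)
  have hRP : R (1 / β) ≤ α * P (1 / β) :=
    (div_le_iff₀' hα0).1 (hclose _ ⟨hb0.le, le_rfl⟩)
  rw [one_div, inv_mul_le_iff₀ (by positivity)]
  calc sSup (R '' Icc 0 1) ≤ β * R (1 / β) := hRsup
    _ ≤ β * (α * P (1 / β)) := by gcongr
    _ = α * β * P (1 / β) := by ring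
    _ ≤ α * β * sSup (P '' Icc 0 1) := by gcongr

/-- If a price-posting revenue curve `P` lies below a concave ex ante revenue
curve `R` with `R 0 = 0` and is `(α,β)`-close to it for price posting, then
the optimal price-posting revenue is an `αβ`-approximation to the optimal
single-agent revenue. -/
theorem optimal_price_approximates_optimal_revenue (P R : ℝ → ℝ) (α β : ℝ)
    (hα : 1 ≤ α) (hβ : 1 ≤ β)
    (hRnn : ∀ q ∈ Set.Icc (0 : ℝ) 1, 0 ≤ R q)
    (hRmono : MonotoneOn R (Set.Icc (0 : ℝ) (1 / β)))
    (hR0 : R 0 = 0)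
    (hconc : ConcaveOn ℝ (Set.Icc (0 : ℝ) 1) R)
    (hPR : ∀ q ∈ Set.Icc (0 : ℝ) 1, P q ≤ R q)
    (hclose : ∀ q ∈ Set.Icc (0 : ℝ) (1 / β), R q / α ≤ P q) :
    (1 / (α * β)) * sSup (R '' Set.Icc (0 : ℝ) 1) ≤ sSup (P '' Set.Icc (0 : ℝ) 1) :=
  optimal_price_approximates_optimal_revenue_general P R α β hα hβ hRmono hR0 hconc hPR hclose
end

section
/- Let τ : [0,1] → ℝ≥0 ∪ {∞} be a convex nondecreasing allocation-payment function with τ(0) = 0. For a value v > 0 and budget w > 0, define the purchase of type (v, w) as the payment τ(x*) where x* maximizes v·x − τ(x) subject to x ∈ [0,1] and τ(x) ≤ w. Then for budgets 0 < w† ≤ w‡, the payment of type (v, w†) is at least (w†/w‡) times the payment of type (v, w‡). -/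
/-- A private-budget agent facing a convex nondecreasing allocation-payment
menu `τ` buys the utility-maximizing quantity subject to her budget (breaking
ties toward larger allocations).  Decreasing the budget from `w2` to
`w1 ≤ w2` decreases her payment by at most the factor `w2 / w1`. -/
theorem payment_budget_monotone (τ : ℝ → ℝ) (v w1 w2 x1 x2 : ℝ)
    (hτconv : ConvexOn ℝ (Set.Icc (0 : ℝ) 1) τ)
    (hτmono : MonotoneOn τ (Set.Icc (0 : ℝ) 1))
    (hτ0 : τ 0 = 0)
    (hv : 0 < v) (hw1 : 0 < w1) (hw12 : w1 ≤ w2)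
    (hx1 : x1 ∈ Set.Icc (0 : ℝ) 1) (hx1b : τ x1 ≤ w1)
    (hx2 : x2 ∈ Set.Icc (0 : ℝ) 1) (hx2b : τ x2 ≤ w2)
    -- `x1` is the greatest maximizer of `v·x − τ x` subject to `τ x ≤ w1`:
    (hmax1 : ∀ x ∈ Set.Icc (0 : ℝ) 1, τ x ≤ w1 → v * x - τ x ≤ v * x1 - τ x1)
    (hgr1 : ∀ x ∈ Set.Icc (0 : ℝ) 1, τ x ≤ w1 → v * x - τ x = v * x1 - τ x1 → x ≤ x1)
    -- `x2` is the greatest maximizer of `v·x − τ x` subject to `τ x ≤ w2`: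
    (hmax2 : ∀ x ∈ Set.Icc (0 : ℝ) 1, τ x ≤ w2 → v * x - τ x ≤ v * x2 - τ x2)
    (hgr2 : ∀ x ∈ Set.Icc (0 : ℝ) 1, τ x ≤ w2 → v * x - τ x = v * x2 - τ x2 → x ≤ x2) :
    (w1 / w2) * τ x2 ≤ τ x1 := by
  have hw2 : (0:ℝ) < w2 := lt_of_lt_of_le hw1 hw12
  have hratio_le_one : w1 / w2 ≤ 1 := (div_le_one hw2).mpr hw12
  have hratio_nonneg : (0:ℝ) ≤ w1 / w2 := le_of_lt (div_pos hw1 hw2)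
  have h0mem : (0:ℝ) ∈ Set.Icc (0:ℝ) 1 := by constructor <;> norm_num
  have hτx2nn : 0 ≤ τ x2 := by
    have := hτmono h0mem hx2 hx2.1
    linarith [hτ0]
  rcases lt_or_ge (τ x1) w1 with hlt | hge
  · -- budget does not bind for the small-budget type: x1 = x2
    have hx1b2 : τ x1 ≤ w2 := le_trans hx1b hw12
    have hu12 : v * x1 - τ x1 ≤ v * x2 - τ x2 := hmax2 x1 hx1 hx1b2
    have hx1eq : x1 = x2 := by
      by_cases hτ2 : τ x2 ≤ w1
      · have h21 := hmax1 x2 hx2 hτ2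
        have heq : v * x2 - τ x2 = v * x1 - τ x1 := le_antisymm h21 hu12
        have h1 := hgr1 x2 hx2 hτ2 heq
        have h2 := hgr2 x1 hx1 hx1b2 heq.symm
        linarith
      · push_neg at hτ2
        set t : ℝ := (w1 - τ x1) / (τ x2 - τ x1) with ht_def
        have hden : 0 < τ x2 - τ x1 := by linarith
        have ht0 : 0 < t := div_pos (by linarith) hden
        have ht1 : t ≤ 1 := (div_le_one hden).mpr (by linarith)
        set a : ℝ := 1 - t with ha_def
        have ha0 : 0 ≤ a := by simp [ha_def]; linarith
        have hab : a + t = 1 := by ring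
        set xt : ℝ := a * x1 + t * x2 with hxt_def
        have hxtmem : xt ∈ Set.Icc (0:ℝ) 1 := by
          have := (convex_Icc (0:ℝ) 1) hx1 hx2 ha0 (le_of_lt ht0) hab
          simpa [smul_eq_mul, hxt_def] using this
        have hτxt : τ xt ≤ a * τ x1 + t * τ x2 := by
          have := hτconv.2 hx1 hx2 ha0 (le_of_lt ht0) hab
          simpa [smul_eq_mul, hxt_def] using this
        have hcomb : a * τ x1 + t * τ x2 = w1 := by
          have htm : t * (τ x2 - τ x1) = w1 - τ x1 := by
            rw [ht_def]; exact div_mul_cancel₀ _ (ne_of_gt hden)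
          rw [ha_def]; linear_combination htm
        have hτxtw1 : τ xt ≤ w1 := by rw [hcomb] at hτxt; exact hτxt
        have huxt : v * xt - τ xt ≥ a * (v * x1 - τ x1) + t * (v * x2 - τ x2) := by
          have : v * xt = a * (v * x1) + t * (v * x2) := by
            simp only [hxt_def]; ring
          linarith
        have hd : 0 ≤ (v * x2 - τ x2) - (v * x1 - τ x1) := by linarith
        have key : 0 ≤ t * ((v * x2 - τ x2) - (v * x1 - τ x1)) := mul_nonneg ht0.le hd
        have hexp : a * (v * x1 - τ x1) + t * (v * x2 - τ x2)
            = (v * x1 - τ x1) + t * ((v * x2 - τ x2) - (v * x1 - τ x1)) := by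
          rw [ha_def]; ring
        have hupp := hmax1 xt hxtmem hτxtw1
        have huxteq : v * xt - τ xt = v * x1 - τ x1 := by linarith
        have hkey0 : t * ((v * x2 - τ x2) - (v * x1 - τ x1)) = 0 := by linarith
        have huequal : v * x1 - τ x1 = v * x2 - τ x2 := by
          rcases mul_eq_zero.mp hkey0 with h | h
          · exact absurd h (ne_of_gt ht0)
          · linarith
        have hxtle := hgr1 xt hxtmem hτxtw1 huxteq
        have hexp2 : a * x1 + t * x2 = x1 + t * (x2 - x1) := by rw [ha_def]; ring
        have hx2le : x2 ≤ x1 := by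
          by_contra h
          push_neg at h
          have := mul_pos ht0 (sub_pos.mpr h)
          have hxtle' : a * x1 + t * x2 ≤ x1 := hxtle
          linarith
        have hx1le := hgr2 x1 hx1 hx1b2 huequal
        linarith
    rw [hx1eq]
    exact mul_le_of_le_one_left hτx2nn hratio_le_one
  · -- budget binds: τ x1 = w1
    have hτx1 : τ x1 = w1 := le_antisymm hx1b hge
    have h1 : (w1 / w2) * τ x2 ≤ (w1 / w2) * w2 :=
      mul_le_mul_of_nonneg_left hx2b hratio_nonneg
    rw [div_mul_cancel₀ w1 (ne_of_gt hw2)] at h1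
    linarith
end

section
/- Let a value distribution F on [1, h] have density f(v) = 1/v² on [1, h) and a point mass of 1/h at v = h (the equal-revenue distribution truncated at h). Then for every posted price p ∈ [1, h], the revenue p·P(V ≥ p) = 1. Moreover, for a capacity C ∈ [1, h], the mechanism that always allocates and charges max(v − C, 0) is incentive compatible for a capacitated agent and has expected revenue ∫_C^h (v − C)·(1/v²) dv + (h − C)·(1/h) = ln(h/C). -/
open MeasureTheory
open scoped ENNReal NNReal

lemma erc_ftc1 (p h : ℝ) (hp : 0 < p) (ph : p ≤ h) :
    ∫ v in p..h, 1 / v ^ 2 = 1 / p - 1 / h := by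
  have hd : ∀ v ∈ Set.uIcc p h, HasDerivAt (fun y => -(y⁻¹)) (1 / v ^ 2) v := by
    intro v hv
    rw [Set.uIcc_of_le ph] at hv
    have hv0 : v ≠ 0 := by nlinarith [hv.1]
    simpa [one_div] using (hasDerivAt_inv hv0).fun_neg
  rw [intervalIntegral.integral_eq_sub_of_hasDerivAt hd ?_]
  · field_simp; ring
  · apply ContinuousOn.intervalIntegrable
    apply ContinuousOn.div continuousOn_const (by fun_prop)
    intro v hv
    rw [Set.uIcc_of_le ph] at hv
    have hv0 : 0 < v := lt_of_lt_of_le hp hv.1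
    positivity

lemma erc_ftc2 (C h : ℝ) (hC : 0 < C) (Ch : C ≤ h) :
    ∫ v in C..h, (v - C) / v ^ 2 = Real.log (h / C) + C / h - 1 := by
  have hh : 0 < h := lt_of_lt_of_le hC Ch
  have hd : ∀ v ∈ Set.uIcc C h,
      HasDerivAt (fun y => Real.log y + C * y⁻¹) ((v - C) / v ^ 2) v := by
    intro v hv
    rw [Set.uIcc_of_le Ch] at hv
    have hv0 : 0 < v := lt_of_lt_of_le hC hv.1
    have h1 := (Real.hasDerivAt_log hv0.ne').fun_add
      ((hasDerivAt_inv hv0.ne').const_mul C)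
    refine h1.congr_deriv ?_
    field_simp; ring
  rw [intervalIntegral.integral_eq_sub_of_hasDerivAt hd ?_]
  · rw [Real.log_div hh.ne' hC.ne']; field_simp; ring
  · apply ContinuousOn.intervalIntegrable
    apply ContinuousOn.div (by fun_prop) (by fun_prop)
    intro v hv
    rw [Set.uIcc_of_le Ch] at hv
    have hv0 : 0 < v := lt_of_lt_of_le hC hv.1
    positivity

/-- The equal-revenue distribution truncated at `h`: density `1/v²` on
`[1, h)` plus an atom of mass `1/h` at `h`.  Every posted price `p ∈ [1,h]`
yields revenue `p · P(V ≥ p) = 1`, while the capacity-exploiting mechanism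
that always allocates and charges `max (v − C) 0` has expected revenue
`log (h/C)` for any capacity `C ∈ [1, h]`. -/
theorem equal_revenue_capacity_gap (h : ℝ) (hh : 1 < h)
    (μ : Measure ℝ)
    (hμ : μ = ((volume.restrict (Set.Ico (1 : ℝ) h)).withDensity
        (fun v => ENNReal.ofReal (1 / v ^ 2)))
      + ENNReal.ofReal (1 / h) • Measure.dirac h) :
    (∀ p ∈ Set.Icc (1 : ℝ) h, p * (μ {v : ℝ | p ≤ v}).toReal = 1) ∧
    (∀ C ∈ Set.Icc (1 : ℝ) h,
      (∫ v, max (v - C) 0 ∂μ) = Real.log (h / C)) := by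
  have hh0 : (0:ℝ) < h := by linarith
  constructor
  · -- Part 1
    intro p hp
    obtain ⟨hp1, hph⟩ := hp
    have hp0 : 0 < p := by linarith
    have hS : {v : ℝ | p ≤ v} = Set.Ici p := rfl
    have hinter : Set.Ici p ∩ Set.Ico 1 h = Set.Ico p h := by
      ext v
      simp only [Set.mem_inter_iff, Set.mem_Ici, Set.mem_Ico]
      constructor
      · rintro ⟨h1, _, h3⟩; exact ⟨h1, h3⟩
      · rintro ⟨h1, h2⟩; exact ⟨h1, le_trans hp1 h1, h2⟩
    have hwd : (((volume.restrict (Set.Ico (1 : ℝ) h)).withDensity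
          (fun v => ENNReal.ofReal (1 / v ^ 2)))) (Set.Ici p)
        = ENNReal.ofReal (1 / p - 1 / h) := by
      rw [withDensity_apply _ measurableSet_Ici,
        Measure.restrict_restrict measurableSet_Ici, hinter]
      have hint : IntegrableOn (fun v : ℝ => 1 / v ^ 2) (Set.Ico p h) := by
        apply (ContinuousOn.integrableOn_Icc ?_).mono_set Set.Ico_subset_Icc_self
        apply ContinuousOn.div continuousOn_const (by fun_prop)
        intro v hv
        have hv0 : 0 < v := lt_of_lt_of_le hp0 hv.1
        positivity
      rw [← ofReal_integral_eq_lintegral_ofReal hint]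
      · congr 1
        rw [MeasureTheory.integral_Ico_eq_integral_Ioo,
          ← MeasureTheory.integral_Ioc_eq_integral_Ioo,
          ← intervalIntegral.integral_of_le hph]
        exact erc_ftc1 p h hp0 hph
      · filter_upwards [ae_restrict_mem measurableSet_Ico] with v hv
        have hv0 : 0 < v := lt_of_lt_of_le hp0 hv.1
        positivity
    rw [hμ, hS, Measure.add_apply, Measure.smul_apply, smul_eq_mul, hwd,
      Measure.dirac_apply' _ measurableSet_Ici,
      Set.indicator_of_mem (by exact hph : h ∈ Set.Ici p), Pi.one_apply, mul_one,
      ← ENNReal.ofReal_add (by rw [sub_nonneg]; exact one_div_le_one_div_of_le hp0 hph) (by positivity)]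
    rw [sub_add_cancel, ENNReal.toReal_ofReal (by positivity)]
    field_simp
  · -- Part 2
    intro C hC
    obtain ⟨hC1, hCh⟩ := hC
    have hC0 : 0 < C := by linarith
    set g : ℝ → ℝ := fun v => max (v - C) 0 with hg
    have hgm : Measurable g := by fun_prop
    have hfin : ∀ᵐ v ∂(volume.restrict (Set.Ico (1:ℝ) h)),
        ENNReal.ofReal (1 / v ^ 2) < ⊤ := by
      filter_upwards with v using ENNReal.ofReal_lt_top
    have hdm : Measurable (fun v : ℝ => ENNReal.ofReal (1 / v ^ 2)) := by fun_prop
    -- the density smul integrand equals a nice function on the restricted set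
    have hcongr : ∀ᵐ v ∂(volume.restrict (Set.Ico (1:ℝ) h)),
        g v * (ENNReal.ofReal (1 / v ^ 2)).toReal = max (v - C) 0 / v ^ 2 := by
      filter_upwards [ae_restrict_mem measurableSet_Ico] with v hv
      have hv0 : 0 < v := lt_of_lt_of_le one_pos hv.1
      rw [ENNReal.toReal_ofReal (by positivity)]
      rw [hg]; ring
    have hcont : ContinuousOn (fun v : ℝ => max (v - C) 0 / v ^ 2) (Set.Icc (1:ℝ) h) := by
      apply ContinuousOn.div (by fun_prop) (by fun_prop)
      intro v hv
      have hv0 : 0 < v := lt_of_lt_of_le one_pos hv.1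
      positivity
    have hint : IntegrableOn (fun v : ℝ => max (v - C) 0 / v ^ 2) (Set.Ico 1 h) :=
      (hcont.integrableOn_Icc).mono_set Set.Ico_subset_Icc_self
    have hint1 : Integrable g (((volume.restrict (Set.Ico (1 : ℝ) h)).withDensity
        (fun v => ENNReal.ofReal (1 / v ^ 2)))) := by
      rw [integrable_withDensity_iff hdm hfin]
      exact (integrable_congr hcongr).mpr hint
    have hint2 : Integrable g (ENNReal.ofReal (1 / h) • Measure.dirac h) := by
      apply Integrable.smul_measure _ ENNReal.ofReal_ne_top
      refine ⟨hgm.aestronglyMeasurable, ?_⟩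
      simp [HasFiniteIntegral, lintegral_dirac]
    rw [hμ, integral_add_measure hint1 hint2]
    -- with-density part
    have e1 : (∫ v, g v ∂(((volume.restrict (Set.Ico (1 : ℝ) h)).withDensity
          (fun v => ENNReal.ofReal (1 / v ^ 2)))))
        = ∫ v in Set.Ico (1:ℝ) h, max (v - C) 0 / v ^ 2 := by
      rw [show (fun v : ℝ => ENNReal.ofReal (1 / v ^ 2))
          = (fun v : ℝ => ((1 / v ^ 2).toNNReal : ℝ≥0∞)) from rfl,
        integral_withDensity_eq_integral_smul (by fun_prop) g]
      apply integral_congr_ae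
      filter_upwards [ae_restrict_mem measurableSet_Ico] with v hv
      have hv0 : 0 < v := lt_of_lt_of_le one_pos hv.1
      rw [NNReal.smul_def, smul_eq_mul, Real.coe_toNNReal _ (by positivity)]
      rw [hg]; ring
    have e2 : (∫ v in Set.Ico (1:ℝ) h, max (v - C) 0 / v ^ 2)
        = Real.log (h / C) + C / h - 1 := by
      rw [MeasureTheory.integral_Ico_eq_integral_Ioo,
        ← MeasureTheory.integral_Ioc_eq_integral_Ioo,
        ← intervalIntegral.integral_of_le hh.le]
      have i1 : IntervalIntegrable (fun v : ℝ => max (v - C) 0 / v ^ 2) volume 1 C := by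
        apply ContinuousOn.intervalIntegrable
        rw [Set.uIcc_of_le hC1]
        exact hcont.mono (Set.Icc_subset_Icc le_rfl hCh)
      have i2 : IntervalIntegrable (fun v : ℝ => max (v - C) 0 / v ^ 2) volume C h := by
        apply ContinuousOn.intervalIntegrable
        rw [Set.uIcc_of_le hCh]
        exact hcont.mono (Set.Icc_subset_Icc hC1 le_rfl)
      rw [← intervalIntegral.integral_add_adjacent_intervals i1 i2]
      have z1 : (∫ v in (1:ℝ)..C, max (v - C) 0 / v ^ 2) = 0 := by
        rw [intervalIntegral.integral_congr (g := fun _ => (0:ℝ)) ?_,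
          intervalIntegral.integral_const, smul_zero]
        intro v hv
        rw [Set.uIcc_of_le hC1] at hv
        simp [max_eq_right (by linarith [hv.2] : v - C ≤ 0)]
      have z2 : (∫ v in C..h, max (v - C) 0 / v ^ 2)
          = Real.log (h / C) + C / h - 1 := by
        rw [intervalIntegral.integral_congr (g := fun v => (v - C) / v ^ 2) ?_]
        · exact erc_ftc2 C h hC0 hCh
        · intro v hv
          rw [Set.uIcc_of_le hCh] at hv
          simp [max_eq_left (by linarith [hv.1] : 0 ≤ v - C)]
      rw [z1, z2, zero_add]
    -- dirac part
    have e3 : (∫ v, g v ∂(ENNReal.ofReal (1 / h) • Measure.dirac h))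
        = (1 / h) * (h - C) := by
      rw [integral_smul_measure, integral_dirac, ENNReal.toReal_ofReal (by positivity),
        smul_eq_mul, hg]
      simp [max_eq_left (by linarith : (0:ℝ) ≤ h - C)]
    rw [e1, e2, e3]
    field_simp
    ring
end

section
/- Let P : [0,1] → ℝ≥0 be a concave price-posting revenue curve with P(0) = 0, let V(q) = P(q)/q (effective price) for q > 0, let q* ∈ (0,1] be a quantile maximizing P, and let h̄ ≥ C > 0 with V(q) ≤ h̄ for all q. For any q̂ ∈ [0,1], let q' = min{q*, q̂}. Then ∫_0^1 max(min(h̄, P(q')/q) − C, 0) dq ≤ P(q') · ln(h̄/C). -/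
/-- Key integral estimate in the capacitated (risk-averse) bound: for a
concave price-posting revenue curve `P` with maximum at `qstar`, values
bounded by `hbar`, and capacity `C ≤ hbar`, the capacity surplus integral is
at most `P q' · log (hbar / C)` where `q' = min qstar qhat`. -/
theorem capacity_surplus_bound (P : ℝ → ℝ) (hbar C qstar qhat : ℝ)
    (hconc : ConcaveOn ℝ (Set.Icc (0 : ℝ) 1) P)
    (hP0 : P 0 = 0)
    (hPnn : ∀ q ∈ Set.Icc (0 : ℝ) 1, 0 ≤ P q)
    (hqstar : qstar ∈ Set.Ioc (0 : ℝ) 1)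
    (hqstar_max : ∀ q ∈ Set.Icc (0 : ℝ) 1, P q ≤ P qstar)
    (hC : 0 < C) (hCh : C ≤ hbar)
    (hVbound : ∀ q ∈ Set.Ioc (0 : ℝ) 1, P q / q ≤ hbar)
    (hqhat : qhat ∈ Set.Icc (0 : ℝ) 1) :
    (∫ q in (0 : ℝ)..1, max (min hbar (P (min qstar qhat) / q) - C) 0) ≤
      P (min qstar qhat) * Real.log (hbar / C) := by
  set q' : ℝ := min qstar qhat with hq'def
  set p : ℝ := P q' with hpdef
  have hq'mem : q' ∈ Set.Icc (0 : ℝ) 1 :=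
    ⟨le_min hqstar.1.le hqhat.1, min_le_of_right_le hqhat.2⟩
  have hp0 : 0 ≤ p := hPnn _ hq'mem
  have hhbar : 0 < hbar := lt_of_lt_of_le hC hCh
  have hphbar : p ≤ hbar := by
    rcases eq_or_lt_of_le hq'mem.1 with h0 | h0
    · rw [hpdef, ← h0, hP0]; exact hhbar.le
    · have hv := hVbound q' ⟨h0, hq'mem.2⟩
      calc p = p / q' * q' := by field_simp
        _ ≤ hbar * 1 := mul_le_mul hv hq'mem.2 h0.le hhbar.le
        _ = hbar := mul_one _
  -- the integrand
  set f : ℝ → ℝ := fun q => max (min hbar (p / q) - C) 0 with hfdef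
  have hfnn : ∀ q, 0 ≤ f q := fun q => le_max_right _ _
  have hfub : ∀ q, f q ≤ hbar - C := by
    intro q
    apply max_le _ (by linarith)
    have : min hbar (p / q) ≤ hbar := min_le_left _ _
    linarith
  have hmeas : Measurable f := by
    apply Measurable.max _ measurable_const
    exact ((measurable_const.min (measurable_const.div measurable_id)).sub measurable_const)
  have hint : ∀ a b : ℝ, IntervalIntegrable f MeasureTheory.volume a b := by
    intro a b
    apply (intervalIntegrable_const (c := hbar - C)).mono_fun'
      hmeas.aestronglyMeasurable
    filter_upwards with q
    rw [Real.norm_eq_abs, abs_of_nonneg (hfnn q)]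
    exact hfub q
  rcases eq_or_lt_of_le hp0 with hp0' | hppos
  · -- p = 0 : integrand vanishes
    have : ∀ q : ℝ, f q = 0 := by
      intro q
      rw [hfdef]
      simp only [← hp0', zero_div]
      rw [min_eq_right hhbar.le, max_eq_right (by linarith)]
    rw [intervalIntegral.integral_congr (fun q _ => this q)]
    simp [← hp0']
  -- now p > 0
  set A : ℝ := p / hbar with hAdef
  set B : ℝ := min (p / C) 1 with hBdef
  have hApos : 0 < A := div_pos hppos hhbar
  have hA1 : A ≤ 1 := by
    rw [hAdef, div_le_one hhbar]; exact hphbar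
  have hAB : A ≤ B := by
    apply le_min _ hA1
    exact div_le_div_of_nonneg_left hp0 hC hCh
  have hBpos : 0 < B := lt_of_lt_of_le hApos hAB
  have hB1 : B ≤ 1 := min_le_right _ _
  -- split the integral
  have hsplit : (∫ q in (0:ℝ)..1, f q) =
      (∫ q in (0:ℝ)..A, f q) + (∫ q in A..B, f q) + (∫ q in B..(1:ℝ), f q) := by
    rw [intervalIntegral.integral_add_adjacent_intervals (hint 0 A) (hint A B),
      intervalIntegral.integral_add_adjacent_intervals (hint 0 B) (hint B 1)]
  -- piece 1
  have hI1 : (∫ q in (0:ℝ)..A, f q) ≤ (hbar - C) * A := by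
    have := intervalIntegral.integral_mono_on hApos.le (hint 0 A)
      (intervalIntegrable_const (c := hbar - C)) (fun q _ => hfub q)
    rwa [intervalIntegral.integral_const, smul_eq_mul, sub_zero, mul_comm] at this
  -- piece 2
  have hI2 : (∫ q in A..B, f q) = p * Real.log (B / A) - (B - A) * C := by
    have hcongr : ∀ q ∈ Set.uIcc A B, f q = p * q⁻¹ - C := by
      intro q hq
      rw [Set.uIcc_of_le hAB] at hq
      have hqpos : 0 < q := lt_of_lt_of_le hApos hq.1
      have h1 : p / q ≤ hbar := by
        rw [div_le_iff₀ hqpos]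
        calc p = hbar * A := by rw [hAdef]; field_simp
          _ ≤ hbar * q := by nlinarith [hq.1]
      have h2 : C ≤ p / q := by
        rw [le_div_iff₀ hqpos]
        have : q ≤ p / C := le_trans hq.2 (min_le_left _ _)
        calc C * q = q * C := mul_comm _ _
          _ ≤ (p / C) * C := by nlinarith
          _ = p := by field_simp
      rw [hfdef]
      simp only []
      rw [min_eq_right h1, max_eq_left (by linarith), div_eq_mul_inv]
    have hinv : IntervalIntegrable (fun q : ℝ => p * q⁻¹) MeasureTheory.volume A B := by
      apply ContinuousOn.intervalIntegrable
      apply continuousOn_const.mul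
      apply ContinuousOn.inv₀ continuousOn_id
      intro x hx
      rw [Set.uIcc_of_le hAB] at hx
      exact ne_of_gt (lt_of_lt_of_le hApos hx.1)
    rw [intervalIntegral.integral_congr hcongr,
      intervalIntegral.integral_sub hinv intervalIntegrable_const,
      intervalIntegral.integral_const_mul, integral_inv_of_pos hApos hBpos,
      intervalIntegral.integral_const, smul_eq_mul, mul_comm (B - A) C, mul_comm C (B - A)]
  -- piece 3
  have hI3 : (∫ q in B..(1:ℝ), f q) ≤ 0 := by
    rcases le_or_gt (p / C) 1 with hle | hlt
    · have hB : B = p / C := min_eq_left hle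
      have hcongr : ∀ q ∈ Set.uIcc B 1, f q = 0 := by
        intro q hq
        rw [Set.uIcc_of_le hB1] at hq
        have hqpos : 0 < q := lt_of_lt_of_le hBpos hq.1
        have : p / q ≤ C := by
          rw [div_le_iff₀ hqpos]
          calc p = (p / C) * C := by field_simp
            _ = C * (p / C) := mul_comm _ _
            _ ≤ C * q := by rw [← hB]; nlinarith [hq.1]
        rw [hfdef]
        simp only []
        rw [max_eq_right]
        have : min hbar (p / q) ≤ C := le_trans (min_le_right _ _) this
        linarith
      rw [intervalIntegral.integral_congr hcongr]
      simp
    · have hB : B = 1 := min_eq_right hlt.le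
      rw [hB, intervalIntegral.integral_same]
  -- combine
  have hlogid : Real.log (B / A) = Real.log B + Real.log (hbar / p) := by
    rw [← Real.log_mul hBpos.ne' (ne_of_gt (div_pos hhbar hppos))]
    congr 1
    rw [hAdef]; field_simp
  have hkey : hbar * A - C * B + p * Real.log (B / A) ≤ p * Real.log (hbar / C) := by
    have hAval : hbar * A = p := by rw [hAdef]; field_simp
    rw [hAval, hlogid]
    have hlogsplit : Real.log (hbar / C) = Real.log (hbar / p) + Real.log (p / C) := by
      rw [← Real.log_mul (ne_of_gt (div_pos hhbar hppos)) (ne_of_gt (div_pos hppos hC))]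
      congr 1; field_simp
    rw [hlogsplit]
    have hgoal : p - C * B + p * Real.log B ≤ p * Real.log (p / C) := by
      rcases le_or_gt (p / C) 1 with hle | hlt
      · have hB : B = p / C := min_eq_left hle
        rw [hB]
        have : C * (p / C) = p := by field_simp
        rw [this]
        simp
      · have hB : B = 1 := min_eq_right hlt.le
        rw [hB, Real.log_one, mul_zero, mul_one, add_zero]
        -- need p - C ≤ p * log (p / C)
        have hx : (0:ℝ) < C / p := div_pos hC hppos
        have h1 : Real.log (C / p) ≤ C / p - 1 := Real.log_le_sub_one_of_pos hx
        have h2 : Real.log (p / C) = - Real.log (C / p) := by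
          rw [← Real.log_inv]; congr 1; field_simp
        have h3 : 1 - C / p ≤ Real.log (p / C) := by rw [h2]; linarith
        have h4 : p * (1 - C / p) ≤ p * Real.log (p / C) :=
          mul_le_mul_of_nonneg_left h3 hppos.le
        have h5 : p * (1 - C / p) = p - C := by field_simp
        linarith
    nlinarith [hgoal]
  rw [hsplit]
  have htot := add_le_add (add_le_add hI1 hI2.le) hI3
  linarith [hkey]
end
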